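/- arXiv:1311.0981 — 4 statements merged into one kernel-verified Lean document; each statement's English description precedes it below -/
import Mathlib

section
/- Let G be a finite simple connected graph on n vertices whose edge set E has exactly n elements (so that G is a uni-cyclic graph U_{n,m}), and let c be a cycle in G of length m with edge set C = {e_1, ..., e_m}. Then a subset F ⊆ E is a face of the spanning simplicial complex Δ_s(U_{n,m}) — that is, F is contained in the edge set of some spanning tree of G — if and only if F does not contain the whole cycle edge set C. -/
/-!
Deleting an edge of a cycle keeps a connected graph connected, since that edge is not a bridge,
and a connected graph on `n` vertices with `n - 1` edges is a tree. So if `F` misses an edge `e`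
of `c`, then `E \ {e}` is a spanning tree containing `F`. Conversely, no tree contains all the
edges of a cycle.
-/

open SimpleGraph

namespace SimpleGraph

variable {V : Type*} {G : SimpleGraph V}

lemma Connected.connected_deleteEdges_of_mem_edges_isCycle (hG : G.Connected) {u : V}
    {p : G.Walk u u} (hp : p.IsCycle) {e : Sym2 V} (he : e ∈ p.edges) :
    (G.deleteEdges {e}).Connected := by
  induction e using Sym2.ind with
  | _ x y =>
    exact hG.connected_delete_edge_of_not_isBridge fun hb ↦ hb.notMem_edges_of_isCycle hp he

lemma Connected.isTree_deleteEdges_of_mem_edges_isCycle [Finite V] (hG : G.Connected)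
    (hcard : Nat.card G.edgeSet = Nat.card V) {u : V} {p : G.Walk u u} (hp : p.IsCycle)
    {e : Sym2 V} (he : e ∈ p.edges) : (G.deleteEdges {e}).IsTree := by
  have heG : e ∈ G.edgeSet := p.edges_subset_edgeSet he
  have hpos : 0 < Nat.card G.edgeSet := Nat.card_pos_iff.mpr ⟨⟨⟨e, heG⟩⟩, Set.toFinite _⟩
  refine isTree_iff_connected_and_card.mpr
    ⟨hG.connected_deleteEdges_of_mem_edges_isCycle hp he, ?_⟩
  rw [edgeSet_deleteEdges, Nat.card_coe_set_eq, Set.ncard_sdiff_singleton_of_mem heG,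
    ← Nat.card_coe_set_eq]
  omega

lemma IsAcyclic.not_forall_mem_edgeSet_of_isCycle {H : SimpleGraph V} (hH : H.IsAcyclic)
    {u : V} {p : G.Walk u u} (hp : p.IsCycle) : ¬ ∀ e ∈ p.edges, e ∈ H.edgeSet :=
  fun hsub ↦ hH _ (hp.transfer hsub)

end SimpleGraph

theorem face_iff_not_contains_cycle_general
    {V : Type*} [Fintype V] [DecidableEq V] (n : ℕ)
    (G : SimpleGraph V) [DecidableRel G.Adj]
    (hconn : G.Connected)
    (hV : Fintype.card V = n)
    (hE : G.edgeFinset.card = n)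
    (v : V) (c : G.Walk v v) (hc : c.IsCycle)
    (F : Finset (Sym2 V)) (hF : F ⊆ G.edgeFinset) :
    (∃ T : Finset (Sym2 V), T ⊆ G.edgeFinset ∧
        (SimpleGraph.fromEdgeSet (↑T : Set (Sym2 V))).IsTree ∧ F ⊆ T) ↔
      ¬ (c.edges.toFinset ⊆ F) := by
  constructor
  · rintro ⟨T, -, hT, hFT⟩ hcF
    refine hT.isAcyclic.not_forall_mem_edgeSet_of_isCycle hc fun e he ↦ ?_
    rw [edgeSet_fromEdgeSet]
    exact ⟨hFT (hcF (List.mem_toFinset.mpr he)),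
      G.not_isDiag_of_mem_edgeSet (c.edges_subset_edgeSet he)⟩
  · intro hcF
    obtain ⟨e, heC, heF⟩ := Finset.not_subset.mp hcF
    refine ⟨G.edgeFinset.erase e, Finset.erase_subset _ _, ?_,
      Finset.subset_erase.mpr ⟨hF, heF⟩⟩
    have hcard : Nat.card G.edgeSet = Nat.card V := by
      rw [Nat.card_eq_fintype_card, card_edgeSet, hE, Nat.card_eq_fintype_card, hV]
    rw [Finset.coe_erase, coe_edgeFinset, ← deleteEdges_fromEdgeSet, fromEdgeSet_edgeSet]
    exact hconn.isTree_deleteEdges_of_mem_edges_isCycle hcard hc (List.mem_toFinset.mp heC)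

/-- For a uni-cyclic graph `U_{n,m}` (a finite simple connected graph on `n`
vertices with exactly `n` edges) with cycle `c` of length `m`, a subset
`F ⊆ E` is a face of the spanning simplicial complex `Δ_s(U_{n,m})` — i.e. `F`
is contained in the edge set of some spanning tree of `G` — if and only if `F`
does not contain the whole edge set of the cycle `c`. -/
theorem face_iff_not_contains_cycle
    {V : Type*} [Fintype V] [DecidableEq V] (n m : ℕ)
    (G : SimpleGraph V) [DecidableRel G.Adj]
    (hconn : G.Connected)
    (hV : Fintype.card V = n)
    (hE : G.edgeFinset.card = n)
    (v : V) (c : G.Walk v v) (hc : c.IsCycle) (hm : c.length = m)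
    (F : Finset (Sym2 V)) (hF : F ⊆ G.edgeFinset) :
    (∃ T : Finset (Sym2 V), T ⊆ G.edgeFinset ∧
        (SimpleGraph.fromEdgeSet (↑T : Set (Sym2 V))).IsTree ∧ F ⊆ T) ↔
      ¬ (c.edges.toFinset ⊆ F) :=
  face_iff_not_contains_cycle_general n G hconn hV hE v c hc F hF
end

section
/- Let G be a finite simple connected graph on n vertices whose edge set E has exactly n elements (so that G is a uni-cyclic graph U_{n,m}), and let c be a cycle in G of length m (3 ≤ m ≤ n) with edge set C = {e_1, ..., e_m}. Then the spanning simplicial complex Δ_s(U_{n,m}) has dimension n − 2, and its f-vector (f_0, f_1, ..., f_{n−2}) satisfies: f_i = C(n, i+1) for 0 ≤ i ≤ m − 2, and f_i = C(n, i+1) − C(n−m, i−m+1) for m − 2 < i ≤ n − 2, where f_i is the number of subsets of E of cardinality i+1 that are contained in the edge set of some spanning tree of G. -/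
/-- `F` is a face of the spanning simplicial complex `Δ_s(G)`: `F` is contained
in the edge set of some spanning tree of `G` (a subset `T` of the edges of `G`
such that the spanning subgraph with edge set `T` is a tree). -/
def IsSpanningFace {V : Type*} [Fintype V] [DecidableEq V]
    (G : SimpleGraph V) [DecidableRel G.Adj] (F : Finset (Sym2 V)) : Prop :=
  ∃ T : Finset (Sym2 V), T ⊆ G.edgeFinset ∧
    (SimpleGraph.fromEdgeSet (↑T : Set (Sym2 V))).IsTree ∧ F ⊆ T

/-!
A connected graph with as many edges as vertices is one edge away from a tree: deleting any
edge `e` of its cycle `C` leaves it connected (`e` is not a bridge) with `n - 1` edges, hence a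
spanning tree, and conversely no spanning tree contains all of `C`. So the faces of `Δ_s(G)`
are exactly the edge sets not containing `C`, and `f_i` counts the `(i+1)`-subsets of the `n`
edges minus those containing the `m` edges of `C`, of which there are `C(n - m, i + 1 - m)`.
-/

open Finset

namespace Finset

variable {α : Type*} [DecidableEq α] {C E : Finset α} {k : ℕ}

theorem card_filter_superset_powersetCard (hCE : C ⊆ E) (hk : #C ≤ k) :
    #{F ∈ E.powersetCard k | C ⊆ F} = (#E - #C).choose (k - #C) := by
  rw [← card_sdiff_of_subset hCE, ← card_powersetCard]
  refine card_nbij' (· \ C) (· ∪ C) ?_ ?_ ?_ ?_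
  · intro F hF
    simp only [coe_filter, mem_powersetCard, Set.mem_ofPred_eq, mem_coe] at hF ⊢
    obtain ⟨⟨hFE, rfl⟩, hCF⟩ := hF
    exact ⟨sdiff_subset_sdiff hFE subset_rfl, card_sdiff_of_subset hCF⟩
  · intro D hD
    simp only [coe_filter, mem_powersetCard, Set.mem_ofPred_eq, mem_coe] at hD ⊢
    have hDC : Disjoint D C := disjoint_of_subset_left hD.1 sdiff_disjoint
    refine ⟨⟨union_subset (hD.1.trans sdiff_subset) hCE, ?_⟩, subset_union_right⟩
    rw [card_union_of_disjoint hDC, hD.2]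
    omega
  · intro F hF
    exact sdiff_union_of_subset (mem_filter.mp hF).2
  · intro D hD
    exact union_sdiff_cancel_right
      (disjoint_of_subset_left (mem_powersetCard.mp hD).1 sdiff_disjoint)

theorem card_filter_not_superset_powersetCard_of_lt (hk : k < #C) :
    #{F ∈ E.powersetCard k | ¬C ⊆ F} = (#E).choose k := by
  rw [filter_true_of_mem, card_powersetCard]
  intro F hF hCF
  have := card_le_card hCF
  rw [(mem_powersetCard.mp hF).2] at this
  omega

theorem card_filter_not_superset_powersetCard (hCE : C ⊆ E) (hk : #C ≤ k) :
    #{F ∈ E.powersetCard k | ¬C ⊆ F} = (#E).choose k - (#E - #C).choose (k - #C) := by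
  rw [filter_not, card_sdiff_of_subset (filter_subset _ _), card_powersetCard,
    card_filter_superset_powersetCard hCE hk]

end Finset

namespace SimpleGraph

variable {V : Type*} {G : SimpleGraph V}

theorem Walk.IsCycle.exists_mem_edges_notMem_of_isAcyclic {H : SimpleGraph V} (hH : H.IsAcyclic)
    {u : V} {c : G.Walk u u} (hc : c.IsCycle) : ∃ e ∈ c.edges, e ∉ H.edgeSet := by
  by_contra! h
  exact hH _ (hc.transfer h)

theorem Connected.isTree_deleteEdges_of_mem_cycle [Finite V] (hG : G.Connected)
    (hcard : Nat.card G.edgeSet = Nat.card V) {u : V} {c : G.Walk u u} (hc : c.IsCycle)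
    {e : Sym2 V} (he : e ∈ c.edges) : (G.deleteEdges {e}).IsTree := by
  have hbridge : ¬G.IsBridge e := fun h ↦ h.notMem_edges_of_isCycle hc he
  have heG : e ∈ G.edgeSet := c.edges_subset_edgeSet he
  refine isTree_iff_connected_and_card.mpr ⟨?_, ?_⟩
  · induction e with
    | h x y => exact hG.connected_delete_edge_of_not_isBridge hbridge
  · have hpos : 0 < Nat.card G.edgeSet := Nat.card_pos_iff.mpr ⟨⟨e, heG⟩, Set.toFinite _⟩
    rw [edgeSet_deleteEdges, Nat.card_coe_set_eq, Set.ncard_sdiff_singleton_of_mem heG,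
      ← Nat.card_coe_set_eq]
    omega

variable [Fintype V] [DecidableEq V] [DecidableRel G.Adj]

theorem fromEdgeSet_edgeFinset_erase (e : Sym2 V) :
    fromEdgeSet ↑(G.edgeFinset.erase e) = G.deleteEdges {e} := by
  rw [coe_erase, coe_edgeFinset, fromEdgeSet_sdiff, fromEdgeSet_edgeSet]
  rfl

theorem isSpanningFace_iff (hG : G.Connected) (hcard : #G.edgeFinset = Fintype.card V)
    {u : V} {c : G.Walk u u} (hc : c.IsCycle) {F : Finset (Sym2 V)} :
    IsSpanningFace G F ↔ F ⊆ G.edgeFinset ∧ ¬c.edges.toFinset ⊆ F := by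
  constructor
  · rintro ⟨T, hTE, hT, hFT⟩
    obtain ⟨e, hec, heT⟩ := hc.exists_mem_edges_notMem_of_isAcyclic hT.isAcyclic
    refine ⟨hFT.trans hTE, fun hCF ↦ heT ?_⟩
    rw [edgeSet_fromEdgeSet]
    exact ⟨hFT (hCF (List.mem_toFinset.mpr hec)),
      G.not_isDiag_of_mem_edgeSet (c.edges_subset_edgeSet hec)⟩
  · rintro ⟨hFE, hCF⟩
    obtain ⟨e, hec, heF⟩ := not_subset.mp hCF
    refine ⟨G.edgeFinset.erase e, erase_subset _ _, ?_,
      fun f hf ↦ mem_erase.mpr ⟨fun h ↦ heF (h ▸ hf), hFE hf⟩⟩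
    rw [fromEdgeSet_edgeFinset_erase]
    refine hG.isTree_deleteEdges_of_mem_cycle ?_ hc (List.mem_toFinset.mp hec)
    rwa [Nat.card_eq_fintype_card, Nat.card_eq_fintype_card, ← edgeFinset_card]

theorem ncard_setOf_isSpanningFace_card_eq (hG : G.Connected)
    (hcard : #G.edgeFinset = Fintype.card V) {u : V} {c : G.Walk u u} (hc : c.IsCycle) (k : ℕ) :
    {F : Finset (Sym2 V) | IsSpanningFace G F ∧ #F = k}.ncard =
      #{F ∈ G.edgeFinset.powersetCard k | ¬c.edges.toFinset ⊆ F} := by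
  rw [← Set.ncard_coe_finset]
  congr 1
  ext F
  simp only [Set.mem_ofPred_eq, coe_filter, mem_powersetCard, isSpanningFace_iff hG hcard hc]
  tauto

end SimpleGraph

open SimpleGraph in
theorem fvector_of_unicyclic_general
    {V : Type*} [Fintype V] [DecidableEq V] (n m : ℕ)
    (G : SimpleGraph V) [DecidableRel G.Adj]
    (hconn : G.Connected)
    (hV : Fintype.card V = n)
    (hE : G.edgeFinset.card = n)
    (v : V) (c : G.Walk v v) (hc : c.IsCycle) (hm : c.length = m) :
    ((∃ F : Finset (Sym2 V), IsSpanningFace G F ∧ F.card = n - 1) ∧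
      (∀ F : Finset (Sym2 V), IsSpanningFace G F → F.card ≤ n - 1)) ∧
    (∀ i : ℕ, i ≤ m - 2 →
      {F : Finset (Sym2 V) | IsSpanningFace G F ∧ F.card = i + 1}.ncard =
        n.choose (i + 1)) ∧
    (∀ i : ℕ, m - 2 < i → i ≤ n - 2 →
      {F : Finset (Sym2 V) | IsSpanningFace G F ∧ F.card = i + 1}.ncard =
        n.choose (i + 1) - (n - m).choose (i + 1 - m)) := by
  have hCcard : #c.edges.toFinset = m := by
    rw [List.toFinset_card_of_nodup hc.edges_nodup, c.length_edges, hm]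
  have hCE : c.edges.toFinset ⊆ G.edgeFinset := fun e he ↦
    mem_edgeFinset.mpr (c.edges_subset_edgeSet (List.mem_toFinset.mp he))
  have hm3 : 3 ≤ m := hm ▸ hc.three_le_length
  have hcard : #G.edgeFinset = Fintype.card V := hE.trans hV.symm
  refine ⟨⟨?_, fun F hF ↦ ?_⟩, fun i hi ↦ ?_, fun i hi _ ↦ ?_⟩
  · obtain ⟨e, he⟩ : c.edges.toFinset.Nonempty := card_pos.mp (by omega)
    refine ⟨G.edgeFinset.erase e, (isSpanningFace_iff hconn hcard hc).mpr ?_, ?_⟩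
    · exact ⟨erase_subset _ _, fun h ↦ notMem_erase e _ (h he)⟩
    · rw [card_erase_of_mem (hCE he), hE]
  · obtain ⟨hFE, hCF⟩ := (isSpanningFace_iff hconn hcard hc).mp hF
    have := card_lt_card (hFE.ssubset_of_not_subset fun h ↦ hCF (hCE.trans h))
    omega
  · rw [ncard_setOf_isSpanningFace_card_eq hconn hcard hc,
      card_filter_not_superset_powersetCard_of_lt (by omega), hE]
  · rw [ncard_setOf_isSpanningFace_card_eq hconn hcard hc,
      card_filter_not_superset_powersetCard hCE (by omega), hE, hCcard]

/-- For a uni-cyclic graph `U_{n,m}` (a finite simple connected graph on `n`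
vertices with exactly `n` edges) with cycle of length `m` (`3 ≤ m ≤ n`), the
spanning simplicial complex `Δ_s(U_{n,m})` has dimension `n - 2` (its faces
have at most `n - 1` elements and some face has exactly `n - 1` elements), and
its `f`-vector satisfies `f i = C(n, i+1)` for `i ≤ m - 2` and
`f i = C(n, i+1) - C(n-m, i+1-m)` for `m - 2 < i ≤ n - 2`. -/
theorem fvector_of_unicyclic
    {V : Type*} [Fintype V] [DecidableEq V] (n m : ℕ)
    (hm3 : 3 ≤ m) (hmn : m ≤ n)
    (G : SimpleGraph V) [DecidableRel G.Adj]
    (hconn : G.Connected)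
    (hV : Fintype.card V = n)
    (hE : G.edgeFinset.card = n)
    (v : V) (c : G.Walk v v) (hc : c.IsCycle) (hm : c.length = m) :
    ((∃ F : Finset (Sym2 V), IsSpanningFace G F ∧ F.card = n - 1) ∧
      (∀ F : Finset (Sym2 V), IsSpanningFace G F → F.card ≤ n - 1)) ∧
    (∀ i : ℕ, i ≤ m - 2 →
      {F : Finset (Sym2 V) | IsSpanningFace G F ∧ F.card = i + 1}.ncard =
        n.choose (i + 1)) ∧
    (∀ i : ℕ, m - 2 < i → i ≤ n - 2 →
      {F : Finset (Sym2 V) | IsSpanningFace G F ∧ F.card = i + 1}.ncard =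
        n.choose (i + 1) - (n - m).choose (i + 1 - m)) :=
  fvector_of_unicyclic_general n m G hconn hV hE v c hc hm
end

section
/- Let E be an n-element set and C ⊆ E a fixed m-element subset with 3 ≤ m ≤ n (E being the edge set of the uni-cyclic graph U_{n,m} and C the edge set of its cycle, so that the faces of Δ_s(U_{n,m}) are exactly the subsets of E not containing C). Then for every integer j ≥ 1, the number of functions a : E → ℕ with Σ_{e∈E} a(e) = j whose support {e : a(e) ≠ 0} is a face of Δ_s(U_{n,m}) (i.e., does not contain C) equals Σ_{i=0}^{m−2} C(n, i+1)·C(j−1, i) + Σ_{i=m−1}^{n−2} [C(n, i+1) − C(n−m, i−m+1)]·C(j−1, i). (This is the value at degree j of the Hilbert function of the Stanley–Reisner ring k[Δ_s(U_{n,m})], and is equivalent to the Hilbert series identity H(k[Δ_s(U_{n,m})], t) = Σ_{i=0}^{m−2} C(n,i+1) t^{i+1}/(1−t)^{i+1} + Σ_{i=m−1}^{n−2} [C(n,i+1) − C(n−m,i−m+1)] t^{i+1}/(1−t)^{i+1} + 1, since t^{i+1}/(1−t)^{i+1} = Σ_{j≥1} C(j−1, i) t^j.) -/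
/-!
Sort the monomials by their support. A monomial of degree `j` with support `s` is a composition
of `j` into `#s` positive parts, so there are `C(j-1, #s-1)` of them. A `k`-subset of `E` is a
face unless it contains `C`, and `C(n-m, k-m)` of the `C(n, k)` subsets of size `k` do. Hence the
value is `∑ₖ (C(n,k) - C(n-m,k-m)) C(j-1,k-1)`, where the term `k = n` vanishes.
-/

open Finset

namespace Finset
variable {ι : Type*} [DecidableEq ι]

theorem card_piAntidiag_nat_eq_choose (s : Finset ι) (n : ℕ) :
    #(piAntidiag s n) = (#s + n - 1).choose n := by
  rw [← card_finsuppAntidiag_nat_eq_choose, finsuppAntidiag, card_map, card_attach]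

variable [Fintype ι]

theorem card_filter_piAntidiag_univ_support_eq (s : Finset ι) (k : ℕ) :
    #{a ∈ piAntidiag univ (#s + k) | ({e | a e ≠ 0} : Finset ι) = s} = #(piAntidiag s k) := by
  symm
  -- the inverse `a ↦ a - 1` needs no case split off `s`, since `0 - 1 = 0` in `ℕ`
  refine card_nbij' (fun b e => if e ∈ s then b e + 1 else 0) (fun a e => a e - 1)
    ?_ ?_ ?_ ?_
  · rintro b hb
    simp only [mem_coe, mem_piAntidiag] at hb
    simp only [mem_coe, mem_filter, mem_piAntidiag, mem_univ, implies_true, and_true]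
    refine ⟨?_, ?_⟩
    · rw [sum_ite_mem, univ_inter, sum_add_distrib, hb.1, card_eq_sum_ones, add_comm]
    · ext e
      by_cases he : e ∈ s <;> simp [he]
  · rintro a ha
    simp only [mem_coe, mem_filter, mem_piAntidiag, mem_univ, implies_true, and_true] at ha
    obtain ⟨hsum, hsupp⟩ := ha
    have hpos : ∀ e, a e ≠ 0 ↔ e ∈ s := by simp [← hsupp]
    simp only [mem_coe, mem_piAntidiag]
    refine ⟨?_, fun e he => (hpos e).1 (by omega)⟩
    have hsum_s : ∑ e ∈ s, a e = #s + k := by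
      rw [← hsum, sum_subset (subset_univ s) fun e _ he => not_not.1 (mt (hpos e).1 he)]
    have hpred : ∑ e ∈ s, (a e - 1) + #s = ∑ e ∈ s, a e := by
      rw [card_eq_sum_ones, ← sum_add_distrib]
      exact sum_congr rfl fun e he =>
        Nat.sub_add_cancel (Nat.one_le_iff_ne_zero.2 ((hpos e).2 he))
    omega
  · rintro b hb
    simp only [mem_coe, mem_piAntidiag] at hb
    funext e
    by_cases he : e ∈ s
    · simp [he]
    · simp [he, not_not.1 (mt (hb.2 e) he)]
  · rintro a ha
    simp only [mem_coe, mem_filter] at ha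
    have hpos : ∀ e, a e ≠ 0 ↔ e ∈ s := by simp [← ha.2]
    funext e
    by_cases he : e ∈ s
    · simp [he, Nat.sub_add_cancel (Nat.one_le_iff_ne_zero.2 ((hpos e).2 he))]
    · simp [he, not_not.1 (mt (hpos e).1 he)]

theorem card_filter_piAntidiag_univ_succ_support_eq {s : Finset ι} (hs : s.Nonempty) (j : ℕ) :
    #{a ∈ piAntidiag univ (j + 1) | ({e | a e ≠ 0} : Finset ι) = s} = j.choose (#s - 1) := by
  obtain ⟨t, ht⟩ : ∃ t, #s = t + 1 := Nat.exists_eq_add_one.2 hs.card_pos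
  by_cases hle : #s ≤ j + 1
  · obtain ⟨k, hk⟩ := Nat.exists_eq_add_of_le hle
    rw [hk, card_filter_piAntidiag_univ_support_eq, card_piAntidiag_nat_eq_choose, ht,
      show t + 1 + k - 1 = t + k by omega, Nat.add_sub_cancel, show j = t + k by omega]
    exact Nat.choose_symm_add.symm
  · rw [Nat.choose_eq_zero_of_lt (by omega), card_eq_zero, filter_eq_empty_iff]
    intro a ha hsupp
    have hpos : ∀ e ∈ s, 1 ≤ a e := fun e he => by
      simpa [Nat.one_le_iff_ne_zero, ← hsupp] using he
    have hcard_le : #s ≤ ∑ e ∈ s, a e := by simpa using card_nsmul_le_sum s a 1 hpos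
    have hsub : ∑ e ∈ s, a e ≤ ∑ e, a e := sum_le_sum_of_subset (subset_univ s)
    have hsum : ∑ e, a e = j + 1 := (mem_piAntidiag.1 ha).1
    omega

theorem card_filter_piAntidiag_univ_succ_eq_sum (P : Finset ι → Prop) [DecidablePred P]
    (j : ℕ) :
    #{a ∈ piAntidiag univ (j + 1) | P {e | a e ≠ 0}} =
      ∑ i ∈ range (Fintype.card ι), #{s ∈ powersetCard (i + 1) univ | P s} * j.choose i := by
  set A := piAntidiag (univ : Finset ι) (j + 1)
  have hfiber (s : Finset ι) :
      #{a ∈ {a ∈ A | P {e | a e ≠ 0}} | ({e | a e ≠ 0} : Finset ι) = s} =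
        if P s then #{a ∈ A | ({e | a e ≠ 0} : Finset ι) = s} else 0 := by
    rw [filter_filter]
    split_ifs with hP
    · exact congrArg card (filter_congr fun a _ => and_iff_right_of_imp fun h => h ▸ hP)
    · exact card_eq_zero.2 (filter_eq_empty_iff.2 fun a _ h => hP (h.2 ▸ h.1))
  have hempty : #{a ∈ A | ({e | a e ≠ 0} : Finset ι) = ∅} = 0 := by
    refine card_eq_zero.2 (filter_eq_empty_iff.2 fun a ha hsupp => ?_)
    have hzero : ∀ e, a e = 0 := by simpa [filter_eq_empty_iff] using hsupp
    simp [A, hzero] at ha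
  calc #{a ∈ A | P {e | a e ≠ 0}}
      = ∑ s ∈ (univ : Finset ι).powerset,
          if P s then #{a ∈ A | ({e | a e ≠ 0} : Finset ι) = s} else 0 := by
        rw [card_eq_sum_card_fiberwise (f := fun a : ι → ℕ => ({e | a e ≠ 0} : Finset ι))
          fun a _ => mem_powerset.2 (subset_univ _)]
        exact sum_congr rfl fun s _ => hfiber s
    _ = ∑ i ∈ range (Fintype.card ι), ∑ s ∈ powersetCard (i + 1) univ,
          if P s then j.choose i else 0 := by
        rw [sum_powerset, card_univ, sum_range_succ', powersetCard_zero, sum_singleton, hempty,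
          ite_self, add_zero]
        refine sum_congr rfl fun i _ => sum_congr rfl fun s hs => ?_
        have hcard := (mem_powersetCard.1 hs).2
        rw [card_filter_piAntidiag_univ_succ_support_eq (card_pos.1 (by omega)), hcard,
          Nat.add_sub_cancel]
    _ = _ := by
        simp only [← sum_filter, sum_const, smul_eq_mul]

theorem card_filter_powersetCard_univ_not_superset (C : Finset ι) (k : ℕ) :
    #{s ∈ powersetCard k univ | ¬ C ⊆ s} = (Fintype.card ι).choose k -
      if #C ≤ k then (Fintype.card ι - #C).choose (k - #C) else 0 := by
  have hsplit := card_filter_add_card_filter_not (s := powersetCard k (univ : Finset ι)) (C ⊆ ·)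
  rw [card_powersetCard, card_univ] at hsplit
  split_ifs with hk
  · rw [card_filter_powersetCard_subset C univ k (subset_univ C) hk, card_univ] at hsplit
    omega
  · have hnone : #{s ∈ powersetCard k univ | C ⊆ s} = 0 :=
      card_eq_zero.2 <| filter_eq_empty_iff.2 fun s hs hCs =>
        hk <| (card_le_card hCs).trans (mem_powersetCard.1 hs).2.le
    omega

end Finset

theorem Nat.sum_range_choose_sub_choose_mul_choose (n m j : ℕ) (hm : 2 ≤ m) (hmn : m ≤ n) :
    ∑ i ∈ range n,
        (n.choose (i + 1) - if m ≤ i + 1 then (n - m).choose (i + 1 - m) else 0) * j.choose i =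
      ∑ i ∈ range (m - 1), n.choose (i + 1) * j.choose i +
        ∑ i ∈ Icc (m - 1) (n - 2),
          (n.choose (i + 1) - (n - m).choose (i + 1 - m)) * j.choose i := by
  obtain ⟨p, rfl⟩ : ∃ p, n = p + 2 := ⟨n - 2, by omega⟩
  rw [← sum_range_add_sum_Ico _ (by omega : m - 1 ≤ p + 2), Nat.add_sub_cancel,
    ← Ico_add_one_right_eq_Icc, sum_Ico_succ_top (by omega : m - 1 ≤ p + 1), if_pos (by omega),
    Nat.choose_self, Nat.choose_self, Nat.sub_self, zero_mul, add_zero]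
  congr 1
  · exact sum_congr rfl fun i hi => by rw [if_neg (by simp at hi; omega), Nat.sub_zero]
  · exact sum_congr rfl fun i hi => by rw [if_pos (by simp at hi; omega)]

/-- **Hilbert function of the Stanley–Reisner ring `k[Δ_s(U_{n,m})]`.**
Let `E` be an `n`-element set and `C ⊆ E` an `m`-element subset (`3 ≤ m ≤ n`),
so that the faces of `Δ_s(U_{n,m})` are exactly the subsets of `E` not
containing `C`. Then for every `j ≥ 1`, the number of monomials of total degree
`j` in variables indexed by `E` whose support is a face (i.e. the number of
functions `a : E → ℕ` with `∑ a e = j` whose support does not contain `C`)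
equals
`∑_{i=0}^{m-2} C(n, i+1)·C(j-1, i)
  + ∑_{i=m-1}^{n-2} [C(n, i+1) − C(n−m, i+1−m)]·C(j−1, i)`.
This is the degree-`j` coefficient of the Hilbert series
`H(k[Δ_s(U_{n,m})], t) = 1 + ∑ᵢ fᵢ tⁱ⁺¹/(1−t)ⁱ⁺¹`. -/
theorem hilbert_function_of_unicyclic
    {α : Type*} [Fintype α] [DecidableEq α] (n m j : ℕ)
    (hm3 : 3 ≤ m) (hmn : m ≤ n) (hj : 1 ≤ j)
    (hcard : Fintype.card α = n)
    (C : Finset α) (hC : C.card = m) :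
    {a : α → ℕ | (∑ e, a e) = j ∧ ¬ ((C : Set α) ⊆ Function.support a)}.ncard =
      (∑ i ∈ Finset.range (m - 1), n.choose (i + 1) * (j - 1).choose i) +
      (∑ i ∈ Finset.Icc (m - 1) (n - 2),
        (n.choose (i + 1) - (n - m).choose (i + 1 - m)) * (j - 1).choose i) := by
  have hfaces : {a : α → ℕ | (∑ e, a e) = j ∧ ¬ ((C : Set α) ⊆ Function.support a)} =
      ↑{a ∈ piAntidiag (univ : Finset α) j | ¬ C ⊆ ({e | a e ≠ 0} : Finset α)} := by
    ext a
    simp [Set.subset_def, subset_iff]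
  obtain ⟨j, rfl⟩ : ∃ j', j = j' + 1 := ⟨j - 1, by omega⟩
  rw [hfaces, Set.ncard_coe_finset, card_filter_piAntidiag_univ_succ_eq_sum (¬ C ⊆ ·),
    Nat.add_sub_cancel, ← Nat.sum_range_choose_sub_choose_mul_choose n m j (by omega) hmn, hcard]
  simp only [card_filter_powersetCard_univ_not_superset, hcard, hC]
end

section
/- Let n ≥ m ≥ 3 and for 1 ≤ i ≤ m let F_i = {1, 2, ..., n} \ {i} (the facets of the spanning simplicial complex Δ_s(U_{n,m}) under the standard edge labeling). Then the ordering F_1, F_2, ..., F_m is a shelling of Δ_s(U_{n,m}): for all 1 ≤ i < j ≤ m there exists k < j such that F_i ∩ F_j ⊆ F_k ∩ F_j and |F_j \ F_k| = 1. Hence the spanning simplicial complex Δ_s(U_{n,m}) is shellable. -/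
theorem spanning_complex_unicyclic_shellable_general
    (n m : ℕ) (hmn : m ≤ n)
    (F : ℕ → Finset ℕ) (hF : ∀ i, F i = (Finset.Icc 1 n).erase i)
    (i j : ℕ) (hi : 1 ≤ i) (hij : i < j) (hjm : j ≤ m) :
    ∃ k, 1 ≤ k ∧ k < j ∧ F i ∩ F j ⊆ F k ∩ F j ∧ (F j \ F k).card = 1 := by
  have hi_mem : i ∈ Finset.Icc 1 n := Finset.mem_Icc.2 ⟨hi, by omega⟩
  refine ⟨i, hi, hij, le_rfl, ?_⟩
  rw [hF, hF, Finset.erase_sdiff_erase hij.ne' hi_mem, Finset.card_singleton]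

/-- **`Δ_s(U_{n,m})` is shellable.**
Let `n ≥ m ≥ 3` and for `1 ≤ i ≤ m` let `F i = {1, …, n} \ {i}` be the facets
of the spanning simplicial complex `Δ_s(U_{n,m})` under the standard edge
labeling. Then `F 1, F 2, …, F m` is a shelling: for all `1 ≤ i < j ≤ m` there
exists `k < j` (with `1 ≤ k`) such that `F i ∩ F j ⊆ F k ∩ F j` and
`|F j \ F k| = 1`. Hence `Δ_s(U_{n,m})` is shellable. -/
theorem spanning_complex_unicyclic_shellable
    (n m : ℕ) (hm3 : 3 ≤ m) (hmn : m ≤ n)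
    (F : ℕ → Finset ℕ) (hF : ∀ i, F i = (Finset.Icc 1 n).erase i)
    (i j : ℕ) (hi : 1 ≤ i) (hij : i < j) (hjm : j ≤ m) :
    ∃ k, 1 ≤ k ∧ k < j ∧ F i ∩ F j ⊆ F k ∩ F j ∧ (F j \ F k).card = 1 :=
  spanning_complex_unicyclic_shellable_general n m hmn F hF i j hi hij hjm
end
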